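/- arXiv:2307.09429 — 2 statements merged into one kernel-verified Lean document; each statement's English description precedes it below -/
import Mathlib

section
/- The simplex S_d = conv{−𝟙, e₁, …, e_d} ⊂ ℝ^d (where 𝟙 is the all-ones vector) has lattice width 2 with respect to ℤ^d, realized by the standard basis directions, and is lattice reduced with respect to ℤ^d. -/
/-!
The vertices `-𝟙, e₁, …, e_d` of `S_d` sum to zero. Hence for a nonzero integral `y`
the integers `y · v`, `v` a vertex, sum to zero without all vanishing, so one is `≥ 1`
and another `≤ -1`: every integral direction has width `≥ 2`. Since `S_d ⊆ [-1, 1]^d`,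
the directions `eᵢ` have width exactly `2`.

For reducedness, `eᵢ` is the unique point of `S_d` with `xᵢ = 1` and `-𝟙` the unique
point with `xᵢ = -1`. A convex body `C ⊆ S_d` of lattice width `2` has width `≥ 2` in
direction `eᵢ`, which it can only reach through these two points, so `C` contains every
vertex and `C = S_d`.
-/

open scoped Pointwise

noncomputable section

/-- Standard dot product on `Fin d → ℝ`. -/
def dot {d : ℕ} (x y : Fin d → ℝ) : ℝ := ∑ i, x i * y i

/-- A convex body: convex, compact, with nonempty interior. -/
def IsConvexBody {d : ℕ} (C : Set (Fin d → ℝ)) : Prop :=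
  Convex ℝ C ∧ IsCompact C ∧ (interior C).Nonempty

/-- A full-dimensional lattice: the integer span of a basis of `ℝ^d`. -/
def IsLattice {d : ℕ} (L : Set (Fin d → ℝ)) : Prop :=
  ∃ B : Module.Basis (Fin d) ℝ (Fin d → ℝ),
    L = Set.range (fun z : Fin d → ℤ => ∑ i, (z i : ℝ) • B i)

/-- The dual lattice: vectors pairing integrally with all lattice vectors. -/
def dualLattice {d : ℕ} (L : Set (Fin d → ℝ)) : Set (Fin d → ℝ) :=
  {y | ∀ x ∈ L, ∃ n : ℤ, dot x y = (n : ℝ)}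

/-- Width of `C` in direction `y`: `sup_{a,b ∈ C} y·(a-b)`. -/
def widthDir {d : ℕ} (C : Set (Fin d → ℝ)) (y : Fin d → ℝ) : ℝ :=
  sSup {r | ∃ a ∈ C, ∃ b ∈ C, r = dot y (a - b)}

/-- Lattice width of `C` with respect to a lattice `L`. -/
def latticeWidth {d : ℕ} (C L : Set (Fin d → ℝ)) : ℝ :=
  sInf {w | ∃ y ∈ dualLattice L, y ≠ 0 ∧ w = widthDir C y}

/-- A primitive lattice vector: a nonzero lattice vector such that no proper
fraction of it is a lattice vector. -/
def IsPrimitiveVec {d : ℕ} (L : Set (Fin d → ℝ)) (v : Fin d → ℝ) : Prop :=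
  v ∈ L ∧ v ≠ 0 ∧ ∀ t : ℝ, 0 < t → t < 1 → t • v ∉ L

/-- Lattice diameter of `C` w.r.t. `L`: the supremum of lattice lengths of
lattice segments contained in `C`, a segment of lattice length `t` being one of
the form `[a, a + t • v]` with `v` primitive in `L`. -/
def latticeDiam {d : ℕ} (C L : Set (Fin d → ℝ)) : ℝ :=
  sSup {t : ℝ | 0 ≤ t ∧ ∃ a v, IsPrimitiveVec L v ∧ segment ℝ a (a + t • v) ⊆ C}

/-- The polar body `K* = {y : x·y ≤ 1 ∀ x ∈ K}`. -/
def polarBody {d : ℕ} (K : Set (Fin d → ℝ)) : Set (Fin d → ℝ) :=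
  {y | ∀ x ∈ K, dot x y ≤ 1}

/-- First successive minimum of `K` w.r.t. the lattice `L`. -/
def lambda1 {d : ℕ} (K L : Set (Fin d → ℝ)) : ℝ :=
  sInf {r : ℝ | 0 ≤ r ∧ ∃ x ∈ L, x ≠ 0 ∧ x ∈ r • K}

/-- The difference body `C - C`. -/
def diffBody {d : ℕ} (C : Set (Fin d → ℝ)) : Set (Fin d → ℝ) := C - C

/-- `C` is lattice reduced w.r.t. `L`: it is a convex body and no convex body
properly contained in it has the same lattice width. -/
def IsLatticeReduced {d : ℕ} (C L : Set (Fin d → ℝ)) : Prop :=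
  IsConvexBody C ∧ ∀ C', IsConvexBody C' → C' ⊂ C → latticeWidth C' L ≠ latticeWidth C L

/-- `C` is lattice complete w.r.t. `L`: it is a convex body and no convex body
properly containing it has the same lattice diameter. -/
def IsLatticeComplete {d : ℕ} (C L : Set (Fin d → ℝ)) : Prop :=
  IsConvexBody C ∧ ∀ C', IsConvexBody C' → C ⊂ C' → latticeDiam C' L ≠ latticeDiam C L

/-- A width direction of `C`: a nonzero dual lattice vector realizing the
lattice width. -/
def IsWidthDirection {d : ℕ} (C L : Set (Fin d → ℝ)) (y : Fin d → ℝ) : Prop :=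
  y ∈ dualLattice L ∧ y ≠ 0 ∧ widthDir C y = latticeWidth C L

/-- A diameter direction of `C`: a primitive lattice vector parallel to a
lattice segment in `C` of maximal lattice length. -/
def IsDiameterDirection {d : ℕ} (C L : Set (Fin d → ℝ)) (v : Fin d → ℝ) : Prop :=
  IsPrimitiveVec L v ∧ ∃ a, segment ℝ a (a + latticeDiam C L • v) ⊆ C

/-- A diameter segment of `C`: a lattice segment contained in `C` whose lattice
length equals the lattice diameter of `C`. -/
def IsDiameterSegment {d : ℕ} (C L : Set (Fin d → ℝ)) (a b : Fin d → ℝ) : Prop :=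
  segment ℝ a b ⊆ C ∧ ∃ v, IsPrimitiveVec L v ∧ b = a + latticeDiam C L • v

/-- A polytope: the convex hull of finitely many points. -/
def IsPolytope {d : ℕ} (C : Set (Fin d → ℝ)) : Prop :=
  ∃ V : Finset (Fin d → ℝ), C = convexHull ℝ (V : Set (Fin d → ℝ))

/-- A facet of a `d`-dimensional body: a face (extreme subset) of dimension `d-1`. -/
def IsFacetOf {d : ℕ} (P F : Set (Fin d → ℝ)) : Prop :=
  IsExtreme ℝ P F ∧ Module.finrank ℝ (vectorSpan ℝ F) + 1 = d

/-- The integer lattice `ℤ^d` inside `Fin d → ℝ`. -/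
def intLattice (d : ℕ) : Set (Fin d → ℝ) := {x | ∀ i, ∃ n : ℤ, x i = (n : ℝ)}

/-- The simplex `S_d = conv{-𝟙, e₁, …, e_d}`. -/
def simplexS (d : ℕ) : Set (Fin d → ℝ) :=
  convexHull ℝ (insert (fun _ : Fin d => (-1 : ℝ))
    (Set.range (fun i : Fin d => (Pi.single i (1 : ℝ) : Fin d → ℝ))))

open Matrix

section Width

variable {d : ℕ} {C : Set (Fin d → ℝ)} {y : Fin d → ℝ}

lemma dot_eq_dotProduct (x y : Fin d → ℝ) : dot x y = x ⬝ᵥ y := rfl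

lemma continuous_dot_sub (y : Fin d → ℝ) :
    Continuous fun p : (Fin d → ℝ) × (Fin d → ℝ) => dot y (p.1 - p.2) := by
  unfold dot
  fun_prop

lemma bddAbove_widthDir_set (hC : IsCompact C) (y : Fin d → ℝ) :
    BddAbove {r | ∃ a ∈ C, ∃ b ∈ C, r = dot y (a - b)} := by
  refine ((hC.prod hC).image (continuous_dot_sub y)).bddAbove.mono ?_
  rintro _ ⟨a, ha, b, hb, rfl⟩
  exact ⟨(a, b), ⟨ha, hb⟩, rfl⟩

lemma le_widthDir (hC : IsCompact C) {a b : Fin d → ℝ} (ha : a ∈ C) (hb : b ∈ C) :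
    dot y (a - b) ≤ widthDir C y :=
  le_csSup (bddAbove_widthDir_set hC y) ⟨a, ha, b, hb, rfl⟩

lemma widthDir_le (hC : C.Nonempty) {w : ℝ} (h : ∀ a ∈ C, ∀ b ∈ C, dot y (a - b) ≤ w) :
    widthDir C y ≤ w := by
  obtain ⟨a, ha⟩ := hC
  refine csSup_le ⟨_, a, ha, a, ha, rfl⟩ ?_
  rintro _ ⟨a, ha, b, hb, rfl⟩
  exact h a ha b hb

lemma widthDir_nonneg (hC : IsCompact C) (hne : C.Nonempty) : 0 ≤ widthDir C y := by
  obtain ⟨a, ha⟩ := hne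
  simpa [dot] using le_widthDir (y := y) hC ha ha

lemma exists_widthDir_eq (hC : IsCompact C) (hne : C.Nonempty) (y : Fin d → ℝ) :
    ∃ a ∈ C, ∃ b ∈ C, widthDir C y = dot y (a - b) := by
  obtain ⟨⟨a, b⟩, ⟨ha, hb⟩, hmax⟩ :=
    (hC.prod hC).exists_isMaxOn (hne.prod hne) (continuous_dot_sub y).continuousOn
  refine ⟨a, ha, b, hb,
    le_antisymm (widthDir_le hne fun a' ha' b' hb' => ?_) (le_widthDir hC ha hb)⟩
  exact hmax (show (a', b') ∈ C ×ˢ C from ⟨ha', hb'⟩)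

lemma latticeWidth_le_widthDir (hC : IsCompact C) (hne : C.Nonempty) {L : Set (Fin d → ℝ)}
    (hy : y ∈ dualLattice L) (hy0 : y ≠ 0) : latticeWidth C L ≤ widthDir C y :=
  csInf_le ⟨0, by rintro _ ⟨z, -, -, rfl⟩; exact widthDir_nonneg hC hne⟩ ⟨y, hy, hy0, rfl⟩

end Width

section IntLattice

variable {d : ℕ}

lemma single_mem_intLattice (i : Fin d) : Pi.single i (1 : ℝ) ∈ intLattice d := by
  intro k
  rcases eq_or_ne k i with rfl | hki
  · exact ⟨1, by simp⟩
  · exact ⟨0, by simp [hki]⟩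

lemma intLattice_subset_dualLattice : intLattice d ⊆ dualLattice (intLattice d) := by
  intro y hy x hx
  choose m hm using hx
  choose n hn using hy
  exact ⟨∑ k, m k * n k, by simp [dot, hm, hn]⟩

lemma dualLattice_intLattice : dualLattice (intLattice d) = intLattice d := by
  refine subset_antisymm (fun y hy i => ?_) intLattice_subset_dualLattice
  obtain ⟨n, hn⟩ := hy _ (single_mem_intLattice i)
  exact ⟨n, by rwa [dot_eq_dotProduct, single_dotProduct, one_mul] at hn⟩

end IntLattice

lemma exists_two_le_sub_of_sum_eq_zero {ι : Type*} [Fintype ι] {f : ι → ℝ}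
    (hf : ∀ i, ∃ n : ℤ, f i = n) (hsum : ∑ i, f i = 0) (hne : f ≠ 0) :
    ∃ i j, 2 ≤ f i - f j := by
  have hpos : ∃ i, 0 < f i := by
    by_contra! h
    exact hne (funext fun i =>
      (Finset.sum_eq_zero_iff_of_nonpos fun i _ => h i).1 hsum i (Finset.mem_univ i))
  have hneg : ∃ j, f j < 0 := by
    by_contra! h
    exact hne (funext fun i =>
      (Finset.sum_eq_zero_iff_of_nonneg fun i _ => h i).1 hsum i (Finset.mem_univ i))
  obtain ⟨i, hi⟩ := hpos
  obtain ⟨j, hj⟩ := hneg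
  obtain ⟨m, hm⟩ := hf i
  obtain ⟨n, hn⟩ := hf j
  rw [hm, Int.cast_pos] at hi
  rw [hn, Int.cast_lt_zero] at hj
  exact ⟨i, j, by rw [hm, hn]; exact_mod_cast (by omega : (2 : ℤ) ≤ m - n)⟩

section ExposedVertex

variable {E : Type*} [AddCommGroup E] [Module ℝ E]

lemma convex_insert_setOf_lt (f : E →ₗ[ℝ] ℝ) (v : E) :
    Convex ℝ (insert v {x | f x < f v}) := by
  have hlt : ∀ x, f x < f v → ∀ {a b : ℝ}, 0 ≤ a → 0 < b → a + b = 1 →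
      f (a • v + b • x) < f v := by
    intro x hx a b ha hb hab
    rw [map_add, map_smul, map_smul, smul_eq_mul, smul_eq_mul]
    have hb' : a = 1 - b := by linarith
    subst hb'
    nlinarith [mul_pos hb (sub_pos.2 hx)]
  intro x hx y hy a b ha hb hab
  rcases hx with rfl | hx <;> rcases hy with rfl | hy
  · exact .inl (Convex.combo_self hab _)
  · rcases hb.eq_or_lt with rfl | hb
    · exact .inl (by simp [show a = 1 by linarith])
    · exact .inr (hlt y hy ha hb hab)
  · rcases ha.eq_or_lt with rfl | ha
    · exact .inl (by simp [show b = 1 by linarith])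
    · exact .inr (by rw [add_comm]; exact hlt x hx hb ha (by linarith))
  · exact .inr (convex_halfSpace_lt f.isLinear _ hx hy ha hb hab)

lemma eq_or_lt_of_mem_convexHull (f : E →ₗ[ℝ] ℝ) {V : Set E} {v x : E}
    (hV : ∀ w ∈ V, w ≠ v → f w < f v) (hx : x ∈ convexHull ℝ V) : x = v ∨ f x < f v :=
  convexHull_min (fun w hw => (eq_or_ne w v).imp id (hV w hw)) (convex_insert_setOf_lt f v) hx

end ExposedVertex

section Simplex

variable {d : ℕ}

def simplexVertex (d : ℕ) : Option (Fin d) → Fin d → ℝ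
  | none => fun _ => -1
  | some i => Pi.single i 1

lemma simplexVertex_mem_simplexS (o : Option (Fin d)) : simplexVertex d o ∈ simplexS d := by
  apply subset_convexHull
  cases o with
  | none => exact Set.mem_insert _ _
  | some i => exact Set.mem_insert_of_mem _ ⟨i, rfl⟩

lemma simplexVertex_mem_intLattice (o : Option (Fin d)) : simplexVertex d o ∈ intLattice d := by
  cases o with
  | none => exact fun _ => ⟨-1, by simp [simplexVertex]⟩
  | some i => exact single_mem_intLattice i

lemma sum_simplexVertex : ∑ o, simplexVertex d o = 0 := by
  rw [Fintype.sum_option]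
  simp only [simplexVertex]
  rw [Finset.univ_sum_single (fun _ : Fin d => (1 : ℝ))]
  exact neg_add_cancel _

lemma zero_mem_simplexS : (0 : Fin d → ℝ) ∈ simplexS d := by
  have hw : ∑ _o : Option (Fin d), (1 / (d + 1) : ℝ) = 1 := by
    rw [Finset.sum_const, Finset.card_univ, Fintype.card_option, Fintype.card_fin, nsmul_eq_mul]
    push_cast
    field_simp
  have h := (convex_convexHull ℝ _).sum_mem (fun _ _ => by positivity) hw
    (fun o _ => simplexVertex_mem_simplexS o)
  rwa [← Finset.smul_sum, sum_simplexVertex, smul_zero] at h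

lemma eq_single_or_apply_lt_one {x : Fin d → ℝ} (hx : x ∈ simplexS d) (i : Fin d) :
    x = Pi.single i 1 ∨ x i < 1 := by
  refine (eq_or_lt_of_mem_convexHull (LinearMap.proj i) (v := Pi.single i 1) ?_ hx).imp_right
    fun h => by simpa using h
  rintro _ (rfl | ⟨j, rfl⟩) hne
  · norm_num
  · have hji : j ≠ i := by rintro rfl; exact hne rfl
    simp [hji.symm]

lemma eq_neg_one_or_neg_one_lt_apply {x : Fin d → ℝ} (hx : x ∈ simplexS d) (i : Fin d) :
    x = (fun _ => -1) ∨ -1 < x i := by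
  refine (eq_or_lt_of_mem_convexHull (-LinearMap.proj i) ?_ hx).imp_right fun h => ?_
  · rintro _ (rfl | ⟨j, rfl⟩) hne
    · exact absurd rfl hne
    · simp only [LinearMap.neg_apply, LinearMap.coe_proj, Function.eval, Pi.single_apply]
      split_ifs <;> norm_num
  · simp only [LinearMap.neg_apply, LinearMap.coe_proj, Function.eval] at h
    linarith

lemma apply_le_one_of_mem_simplexS {x : Fin d → ℝ} (hx : x ∈ simplexS d) (i : Fin d) :
    x i ≤ 1 := by
  rcases eq_single_or_apply_lt_one hx i with rfl | h
  · simp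
  · exact h.le

lemma neg_one_le_apply_of_mem_simplexS {x : Fin d → ℝ} (hx : x ∈ simplexS d) (i : Fin d) :
    -1 ≤ x i := by
  rcases eq_neg_one_or_neg_one_lt_apply hx i with rfl | h
  · rfl
  · exact h.le

lemma isCompact_simplexS : IsCompact (simplexS d) :=
  Set.Finite.isCompact_convexHull (𝕜 := ℝ) ((Set.finite_range _).insert _)

-- The affine span of the vertices contains the barycentre `0` and every `eᵢ`.
lemma interior_simplexS_nonempty : (interior (simplexS d)).Nonempty := by
  refine interior_convexHull_nonempty_iff_affineSpan_eq_top.2 ?_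
  have h0 := convexHull_subset_affineSpan (𝕜 := ℝ) _ (zero_mem_simplexS (d := d))
  refine (AffineSubspace.direction_eq_top_iff_of_nonempty ⟨0, h0⟩).1 ?_
  rw [eq_top_iff, ← (Pi.basisFun ℝ (Fin d)).span_eq, Submodule.span_le]
  rintro _ ⟨i, rfl⟩
  simpa using AffineSubspace.vsub_mem_direction
    (subset_affineSpan ℝ _ (Set.mem_insert_of_mem _ (Set.mem_range_self i))) h0

lemma isConvexBody_simplexS : IsConvexBody (simplexS d) :=
  ⟨convex_convexHull ℝ _, isCompact_simplexS, interior_simplexS_nonempty⟩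

end Simplex

section WidthOfSimplex

variable {d : ℕ}

lemma widthDir_simplexS_single_le (i : Fin d) : widthDir (simplexS d) (Pi.single i 1) ≤ 2 := by
  refine widthDir_le ⟨0, zero_mem_simplexS⟩ fun a ha b hb => ?_
  rw [dot_eq_dotProduct, single_dotProduct, one_mul, Pi.sub_apply]
  linarith [apply_le_one_of_mem_simplexS ha i, neg_one_le_apply_of_mem_simplexS hb i]

lemma two_le_widthDir_simplexS {y : Fin d → ℝ} (hy : y ∈ intLattice d) (hy0 : y ≠ 0) :
    2 ≤ widthDir (simplexS d) y := by
  have hsum : ∑ o, dot (simplexVertex d o) y = 0 := by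
    simp only [dot_eq_dotProduct, ← sum_dotProduct, sum_simplexVertex, zero_dotProduct]
  have hne : (fun o => dot (simplexVertex d o) y) ≠ 0 := by
    obtain ⟨k, hk⟩ := Function.ne_iff.1 hy0
    refine Function.ne_iff.2 ⟨some k, ?_⟩
    simpa [simplexVertex, dot_eq_dotProduct] using hk
  obtain ⟨o, o', h⟩ := exists_two_le_sub_of_sum_eq_zero
    (fun o => intLattice_subset_dualLattice hy _ (simplexVertex_mem_intLattice o)) hsum hne
  calc (2 : ℝ) ≤ dot (simplexVertex d o) y - dot (simplexVertex d o') y := h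
    _ = dot y (simplexVertex d o - simplexVertex d o') := by
      simp only [dot_eq_dotProduct, dotProduct_comm y, sub_dotProduct]
    _ ≤ widthDir (simplexS d) y :=
      le_widthDir isCompact_simplexS (simplexVertex_mem_simplexS o) (simplexVertex_mem_simplexS o')

lemma widthDir_simplexS_single (i : Fin d) : widthDir (simplexS d) (Pi.single i 1) = 2 :=
  (widthDir_simplexS_single_le i).antisymm
    (two_le_widthDir_simplexS (single_mem_intLattice i) (by simp))

lemma latticeWidth_simplexS (hd : 0 < d) : latticeWidth (simplexS d) (intLattice d) = 2 := by
  have he : (Pi.single ⟨0, hd⟩ 1 : Fin d → ℝ) ≠ 0 := by simp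
  have hmem := dualLattice_intLattice.symm ▸ single_mem_intLattice (⟨0, hd⟩ : Fin d)
  refine le_antisymm ?_ (le_csInf ⟨_, _, hmem, he, rfl⟩ ?_)
  · exact widthDir_simplexS_single (⟨0, hd⟩ : Fin d) ▸
      latticeWidth_le_widthDir isCompact_simplexS ⟨0, zero_mem_simplexS⟩ hmem he
  · rintro _ ⟨y, hy, hy0, rfl⟩
    exact two_le_widthDir_simplexS (dualLattice_intLattice ▸ hy) hy0

lemma single_mem_and_neg_one_mem_of_two_le_widthDir {C : Set (Fin d → ℝ)} (hC : IsCompact C)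
    (hne : C.Nonempty) (hCS : C ⊆ simplexS d) (i : Fin d)
    (h : 2 ≤ widthDir C (Pi.single i 1)) : Pi.single i 1 ∈ C ∧ (fun _ => -1) ∈ C := by
  obtain ⟨a, ha, b, hb, hab⟩ := exists_widthDir_eq hC hne (Pi.single i 1)
  rw [hab, dot_eq_dotProduct, single_dotProduct, one_mul, Pi.sub_apply] at h
  constructor
  · rcases eq_single_or_apply_lt_one (hCS ha) i with rfl | ha1
    · exact ha
    · linarith [neg_one_le_apply_of_mem_simplexS (hCS hb) i]
  · rcases eq_neg_one_or_neg_one_lt_apply (hCS hb) i with rfl | hb1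
    · exact hb
    · linarith [apply_le_one_of_mem_simplexS (hCS ha) i]

lemma isLatticeReduced_simplexS (hd : 0 < d) : IsLatticeReduced (simplexS d) (intLattice d) := by
  refine ⟨isConvexBody_simplexS, fun C ⟨hconv, hcomp, hint⟩ hCS hwidth => hCS.not_subset ?_⟩
  have hne : C.Nonempty := hint.mono interior_subset
  have hvert (i : Fin d) : Pi.single i 1 ∈ C ∧ (fun _ => -1) ∈ C := by
    refine single_mem_and_neg_one_mem_of_two_le_widthDir hcomp hne hCS.subset i ?_
    rw [← latticeWidth_simplexS hd, ← hwidth]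
    exact latticeWidth_le_widthDir hcomp hne
      (intLattice_subset_dualLattice (single_mem_intLattice i)) (by simp)
  refine convexHull_min ?_ hconv
  rintro _ (rfl | ⟨i, rfl⟩)
  · exact (hvert ⟨0, hd⟩).2
  · exact (hvert i).1

end WidthOfSimplex

/-- `S_d` has lattice width 2 w.r.t. `ℤ^d`, realized by the
standard basis directions, and is lattice reduced w.r.t. `ℤ^d`. -/
theorem simplexS_width_and_reduced (d : ℕ) (hd : 0 < d) :
    latticeWidth (simplexS d) (intLattice d) = 2 ∧
    (∀ i : Fin d, IsWidthDirection (simplexS d) (intLattice d)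
      (Pi.single i (1 : ℝ))) ∧
    IsLatticeReduced (simplexS d) (intLattice d) := by
  refine ⟨latticeWidth_simplexS hd, fun i => ⟨?_, ?_, ?_⟩, isLatticeReduced_simplexS hd⟩
  · exact intLattice_subset_dualLattice (single_mem_intLattice i)
  · simp
  · rw [widthDir_simplexS_single, latticeWidth_simplexS hd]
end
end

section
/- Let P ⊂ ℝ^k and Q ⊂ ℝ^l be full-dimensional polytopes that are lattice complete with respect to ℤ^k and ℤ^l respectively, with diam_{ℤ^k}(P) = diam_{ℤ^l}(Q). Then the Cartesian product P × Q ⊂ ℝ^{k+l} is lattice complete with respect to ℤ^{k+l}, and diam_{ℤ^{k+l}}(P×Q) = diam_{ℤ^k}(P). -/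
open scoped Pointwise

noncomputable section

/-- The Cartesian product `P × Q ⊆ ℝ^(k+l)` of `P ⊆ ℝ^k` and `Q ⊆ ℝ^l`. -/
def prodSet {k l : ℕ} (P : Set (Fin k → ℝ)) (Q : Set (Fin l → ℝ)) :
    Set (Fin (k + l) → ℝ) :=
  {x | (fun i : Fin k => x (Fin.castAdd l i)) ∈ P ∧
       (fun j : Fin l => x (Fin.natAdd k j)) ∈ Q}

/-!
A lattice segment of `P × Q` with primitive direction `w` projects onto a segment of `P` or
of `Q` whose direction is a nonzero integer vector, hence a multiple `≥ 1` of a primitive one;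
so its lattice length is at most the common diameter, while segments of `P` lift to `P × {q}`.

For completeness, let `C ⊋ P × Q` be a convex body and `x ∈ C \ P × Q`. If the first
coordinate `p` of `x` lies in `P`, the slice `{z | (p, z) ∈ C}` is a convex body strictly
containing `Q`, so it has larger lattice diameter, and its segments lift to `C`. Otherwise,
moving `x` towards a point of `P × interior Q` produces a point of `C` with second coordinate
in `Q` and first coordinate outside `P` (a homothety of ratio `< 1` mapping `P` into itself has
its centre in `P`), and the slice argument applies to `P` instead of `Q`.
-/
open Set AffineMap Filter Topology Metric

section LatticeDiam

variable {d : ℕ}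

lemma isClosed_intLattice : IsClosed (intLattice d) := by
  have h : intLattice d = ⋂ i, (fun x : Fin d → ℝ => x i) ⁻¹' range ((↑) : ℤ → ℝ) := by
    ext x
    simp [intLattice, eq_comm]
  rw [h]
  exact isClosed_iInter fun i =>
    Int.isClosedEmbedding_coe_real.isClosed_range.preimage (continuous_apply i)

lemma one_le_norm_of_mem_intLattice {u : Fin d → ℝ} (hu : u ∈ intLattice d) (hu0 : u ≠ 0) :
    1 ≤ ‖u‖ := by
  obtain ⟨i, hi⟩ := Function.ne_iff.mp hu0
  obtain ⟨n, hn⟩ := hu i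
  have hn0 : n ≠ 0 := by
    rintro rfl
    exact hi (by simpa using hn)
  calc (1 : ℝ) ≤ |(n : ℝ)| := by exact_mod_cast Int.one_le_abs hn0
    _ = ‖u i‖ := by rw [hn, Real.norm_eq_abs]
    _ ≤ ‖u‖ := norm_le_pi_norm u i

lemma latticeDiam_nonneg (C L : Set (Fin d → ℝ)) : 0 ≤ latticeDiam C L :=
  Real.sSup_nonneg fun _ ht => ht.1

lemma latticeDiam_le {C L : Set (Fin d → ℝ)} {D : ℝ} (hD : 0 ≤ D)
    (h : ∀ t a v, 0 ≤ t → IsPrimitiveVec L v → segment ℝ a (a + t • v) ⊆ C → t ≤ D) :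
    latticeDiam C L ≤ D :=
  Real.sSup_le (fun t ⟨ht, a, v, hv, hseg⟩ => h t a v ht hv hseg) hD

lemma le_latticeDiam {C : Set (Fin d → ℝ)} (hC : IsCompact C) {t : ℝ} (ht : 0 ≤ t)
    {a v : Fin d → ℝ} (hv : IsPrimitiveVec (intLattice d) v)
    (hseg : segment ℝ a (a + t • v) ⊆ C) : t ≤ latticeDiam C (intLattice d) := by
  refine le_csSup ⟨diam C, ?_⟩ ⟨ht, a, v, hv, hseg⟩
  rintro t ⟨ht, a, v, ⟨hv, hv0, -⟩, hseg⟩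
  calc t ≤ t * ‖v‖ := le_mul_of_one_le_right ht (one_le_norm_of_mem_intLattice hv hv0)
    _ = dist (a + t • v) a := by
      rw [dist_eq_norm, add_sub_cancel_left, norm_smul, Real.norm_of_nonneg ht]
    _ ≤ diam C := dist_le_diam_of_mem hC.isBounded
      (hseg (right_mem_segment ℝ _ _)) (hseg (left_mem_segment ℝ _ _))

lemma exists_isPrimitiveVec_smul {u : Fin d → ℝ} (hu : u ∈ intLattice d) (hu0 : u ≠ 0) :
    ∃ c : ℝ, 0 < c ∧ c ≤ 1 ∧ IsPrimitiveVec (intLattice d) (c • u) := by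
  -- Every `c > 0` with `c • u` integral is at least `‖u‖⁻¹`, so the least such `c` exists.
  set T := {c : ℝ | ‖u‖⁻¹ ≤ c ∧ c • u ∈ intLattice d}
  have hnorm : 0 < ‖u‖ := norm_pos_iff.mpr hu0
  have hT : ∀ c : ℝ, 0 < c → c • u ∈ intLattice d → c ∈ T := fun c hc hcu => by
    refine ⟨?_, hcu⟩
    have h := one_le_norm_of_mem_intLattice hcu (smul_ne_zero hc.ne' hu0)
    rw [norm_smul, Real.norm_of_nonneg hc.le] at h
    rwa [inv_le_iff_one_le_mul₀ hnorm]
  have h1 : (1 : ℝ) ∈ T := hT 1 one_pos (by rwa [one_smul])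
  have hbdd : BddBelow T := ⟨‖u‖⁻¹, fun c hc => hc.1⟩
  have hclosed : IsClosed T :=
    isClosed_Ici.inter (isClosed_intLattice.preimage (continuous_id.smul continuous_const))
  have hmin : sInf T ∈ T := hclosed.csInf_mem ⟨1, h1⟩ hbdd
  have hpos : 0 < sInf T := (inv_pos.mpr hnorm).trans_le hmin.1
  refine ⟨sInf T, hpos, csInf_le hbdd h1, hmin.2, smul_ne_zero hpos.ne' hu0,
    fun t ht0 ht1 ht => ?_⟩
  rw [smul_smul] at ht
  have := csInf_le hbdd (hT _ (mul_pos ht0 hpos) ht)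
  nlinarith

lemma le_latticeDiam_of_mem_intLattice {C : Set (Fin d → ℝ)} (hC : IsCompact C) {t : ℝ}
    (ht : 0 ≤ t) {a u : Fin d → ℝ} (hu : u ∈ intLattice d) (hu0 : u ≠ 0)
    (hseg : segment ℝ a (a + t • u) ⊆ C) : t ≤ latticeDiam C (intLattice d) := by
  obtain ⟨c, hc0, hc1, hcu⟩ := exists_isPrimitiveVec_smul hu hu0
  calc t ≤ t / c := le_div_self ht hc0 hc1
    _ ≤ latticeDiam C (intLattice d) := le_latticeDiam hC (div_nonneg ht hc0.le) hcu
      (by rwa [smul_smul, div_mul_cancel₀ t hc0.ne'])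

end LatticeDiam

lemma segment_subset_of_mapsTo {𝕜 E F : Type*} [Ring 𝕜] [PartialOrder 𝕜] [AddRightMono 𝕜]
    [AddCommGroup E] [Module 𝕜 E] [AddCommGroup F] [Module 𝕜 F] (f : E →ᵃ[𝕜] F)
    {A : Set E} {B : Set F} (hf : MapsTo f A B) {a w : E} {t : 𝕜}
    (h : segment 𝕜 a (a + t • w) ⊆ A) : segment 𝕜 (f a) (f a + t • f.linear w) ⊆ B := by
  have hend : f (a + t • w) = f a + t • f.linear w := by
    rw [add_comm, ← vadd_eq_add, f.map_vadd, vadd_eq_add, add_comm, map_smul]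
  rw [← hend, ← image_segment]
  exact (image_mono h).trans hf.image_subset

section LatticeDiamMaps

variable {m n : ℕ}

lemma latticeDiam_le_of_mapsTo {A : Set (Fin m → ℝ)} {B : Set (Fin n → ℝ)}
    (f : (Fin m → ℝ) →ᵃ[ℝ] (Fin n → ℝ))
    (hf : MapsTo f.linear (intLattice m \ {0}) (intLattice n \ {0}))
    (hB : IsCompact B) (hAB : MapsTo f A B) :
    latticeDiam A (intLattice m) ≤ latticeDiam B (intLattice n) :=
  latticeDiam_le (latticeDiam_nonneg _ _) fun _ _ _ ht hv hseg =>
    have hfv := hf ⟨hv.1, hv.2.1⟩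
    le_latticeDiam_of_mem_intLattice hB ht hfv.1 hfv.2 (segment_subset_of_mapsTo f hAB hseg)

lemma latticeDiam_mono {A B : Set (Fin n → ℝ)} (hB : IsCompact B) (hAB : A ⊆ B) :
    latticeDiam A (intLattice n) ≤ latticeDiam B (intLattice n) :=
  latticeDiam_le_of_mapsTo (AffineMap.id ℝ _) (mapsTo_id _) hB hAB

lemma IsLatticeComplete.latticeDiam_lt_of_mapsTo {P : Set (Fin m → ℝ)} {C : Set (Fin n → ℝ)}
    (hP : IsLatticeComplete P (intLattice m)) (f : (Fin m → ℝ) →ᵃ[ℝ] (Fin n → ℝ))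
    (hf : IsClosedEmbedding f)
    (hfL : MapsTo f.linear (intLattice m \ {0}) (intLattice n \ {0}))
    (hC : Convex ℝ C) (hCc : IsCompact C) (hPC : MapsTo f P C) {z : Fin m → ℝ} (hz : z ∉ P)
    (hfz : f z ∈ C) : latticeDiam P (intLattice m) < latticeDiam C (intLattice n) := by
  have hPP' : P ⊂ f ⁻¹' C := ⟨hPC, fun h => hz (h hfz)⟩
  have hP' : IsConvexBody (f ⁻¹' C) :=
    ⟨hC.affine_preimage f, hf.isCompact_preimage hCc, hP.1.2.2.mono (interior_mono hPC)⟩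
  calc latticeDiam P (intLattice m)
      < latticeDiam (f ⁻¹' C) (intLattice m) :=
        (latticeDiam_mono hP'.2.1 hPP'.subset).lt_of_ne (hP.2 _ hP' hPP').symm
    _ ≤ latticeDiam C (intLattice n) :=
        latticeDiam_le_of_mapsTo f hfL hCc (mapsTo_preimage f C)

end LatticeDiamMaps

section LineMap

variable {E : Type*} [NormedAddCommGroup E] [NormedSpace ℝ E]

/-- The homothety would move a nearest point of `P` to `z` strictly closer to `z`. -/
lemma mem_of_forall_lineMap_mem [ProperSpace E] {P : Set E} (hP : IsClosed P)
    (hne : P.Nonempty) {z : E} {s : ℝ} (hs : s ∈ Ico 0 1) (h : ∀ p ∈ P, lineMap z p s ∈ P) :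
    z ∈ P := by
  obtain ⟨p, hp, hdist⟩ := hP.exists_infDist_eq_dist hne z
  have hle : dist z p ≤ s * dist z p :=
    calc dist z p = infDist z P := hdist.symm
      _ ≤ dist z (lineMap z p s) := infDist_le_dist_of_mem (h p hp)
      _ = s * dist z p := by rw [dist_left_lineMap, Real.norm_of_nonneg hs.1]
  have hzp : dist z p = 0 := by nlinarith [dist_nonneg (x := z) (y := p), hs.2]
  rwa [dist_eq_zero.mp hzp]

lemma exists_lineMap_mem_of_mem_interior {Q : Set E} (x : E) {q : E} (hq : q ∈ interior Q) :
    ∃ s ∈ Ico (0 : ℝ) 1, lineMap x q s ∈ Q := by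
  have hlim : Tendsto (fun s : ℝ => lineMap x q s) (𝓝[<] 1) (𝓝 q) := by
    simpa using ((lineMap_continuous (p := x) (q := q)).tendsto (1 : ℝ)).mono_left
      nhdsWithin_le_nhds
  obtain ⟨s, hsQ, hs⟩ := ((hlim.eventually (mem_interior_iff_mem_nhds.mp hq)).and
    (Ico_mem_nhdsLT zero_lt_one)).exists
  exact ⟨s, hs, hsQ⟩

end LineMap

section Product

variable {k l : ℕ}

def fstPart : (Fin (k + l) → ℝ) →ₗ[ℝ] (Fin k → ℝ) := LinearMap.funLeft ℝ ℝ (Fin.castAdd l)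

def sndPart : (Fin (k + l) → ℝ) →ₗ[ℝ] (Fin l → ℝ) := LinearMap.funLeft ℝ ℝ (Fin.natAdd k)

@[simp]
lemma fstPart_append (u : Fin k → ℝ) (v : Fin l → ℝ) : fstPart (Fin.append u v) = u := by
  ext i
  simp [fstPart]

@[simp]
lemma sndPart_append (u : Fin k → ℝ) (v : Fin l → ℝ) : sndPart (Fin.append u v) = v := by
  ext j
  simp [sndPart]

lemma append_fstPart_sndPart (x : Fin (k + l) → ℝ) : Fin.append (fstPart x) (sndPart x) = x :=
  Fin.append_castAdd_natAdd

lemma fstPart_lineMap (x y : Fin (k + l) → ℝ) (s : ℝ) :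
    fstPart (lineMap x y s) = lineMap (fstPart x) (fstPart y) s :=
  fstPart.toAffineMap.apply_lineMap x y s

lemma sndPart_lineMap (x y : Fin (k + l) → ℝ) (s : ℝ) :
    sndPart (lineMap x y s) = lineMap (sndPart x) (sndPart y) s :=
  sndPart.toAffineMap.apply_lineMap x y s

lemma fstPart_ne_zero_or_sndPart_ne_zero {w : Fin (k + l) → ℝ} (hw : w ≠ 0) :
    fstPart w ≠ 0 ∨ sndPart w ≠ 0 := by
  by_contra! h
  refine hw (funext fun i => Fin.addCases (fun i => ?_) (fun j => ?_) i)
  · exact congrFun h.1 i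
  · exact congrFun h.2 j

lemma append_mem_intLattice {u : Fin k → ℝ} {v : Fin l → ℝ} (hu : u ∈ intLattice k)
    (hv : v ∈ intLattice l) : Fin.append u v ∈ intLattice (k + l) := fun i =>
  Fin.addCases (fun i => by simpa using hu i) (fun j => by simpa using hv j) i

lemma zero_mem_intLattice (d : ℕ) : (0 : Fin d → ℝ) ∈ intLattice d := fun _ => ⟨0, by simp⟩

def appendₗ : ((Fin k → ℝ) × (Fin l → ℝ)) →ₗ[ℝ] (Fin (k + l) → ℝ) where
  toFun uv := Fin.append uv.1 uv.2
  map_add' _ _ := funext fun i => Fin.addCases (fun _ => by simp) (fun _ => by simp) i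
  map_smul' _ _ := funext fun i => Fin.addCases (fun _ => by simp) (fun _ => by simp) i

def embedFst (r : Fin l → ℝ) : (Fin k → ℝ) →ᵃ[ℝ] (Fin (k + l) → ℝ) where
  toFun z := Fin.append z r
  linear := appendₗ ∘ₗ LinearMap.inl ℝ _ _
  map_vadd' _ _ :=
    funext fun i => Fin.addCases (fun _ => by simp [appendₗ]) (fun _ => by simp [appendₗ]) i

def embedSnd (p : Fin k → ℝ) : (Fin l → ℝ) →ᵃ[ℝ] (Fin (k + l) → ℝ) where
  toFun z := Fin.append p z
  linear := appendₗ ∘ₗ LinearMap.inr ℝ _ _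
  map_vadd' _ _ :=
    funext fun i => Fin.addCases (fun _ => by simp [appendₗ]) (fun _ => by simp [appendₗ]) i

@[simp]
lemma embedFst_apply (r : Fin l → ℝ) (z : Fin k → ℝ) : embedFst r z = Fin.append z r := rfl

@[simp]
lemma embedSnd_apply (p : Fin k → ℝ) (z : Fin l → ℝ) : embedSnd p z = Fin.append p z := rfl

lemma isClosedEmbedding_embedFst (r : Fin l → ℝ) : IsClosedEmbedding (embedFst (k := k) r) :=
  Isometry.isClosedEmbedding fun _ _ => by simp [Fin.edist_append_eq_max_edist]

lemma isClosedEmbedding_embedSnd (p : Fin k → ℝ) : IsClosedEmbedding (embedSnd (l := l) p) :=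
  Isometry.isClosedEmbedding fun _ _ => by simp [Fin.edist_append_eq_max_edist]

lemma mapsTo_embedFst_linear (r : Fin l → ℝ) :
    MapsTo (embedFst (k := k) r).linear (intLattice k \ {0}) (intLattice (k + l) \ {0}) := by
  rintro u ⟨hu, hu0⟩
  refine ⟨append_mem_intLattice hu (zero_mem_intLattice l), fun h => hu0 ?_⟩
  simpa [embedFst, appendₗ] using congrArg fstPart h

lemma mapsTo_embedSnd_linear (p : Fin k → ℝ) :
    MapsTo (embedSnd (l := l) p).linear (intLattice l \ {0}) (intLattice (k + l) \ {0}) := by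
  rintro v ⟨hv, hv0⟩
  refine ⟨append_mem_intLattice (zero_mem_intLattice k) hv, fun h => hv0 ?_⟩
  simpa [embedSnd, appendₗ] using congrArg sndPart h

lemma prodSet_eq_preimage (P : Set (Fin k → ℝ)) (Q : Set (Fin l → ℝ)) :
    prodSet P Q = (Fin.appendHomeomorph k l).symm ⁻¹' (P ×ˢ Q) := rfl

lemma append_mem_prodSet {P : Set (Fin k → ℝ)} {Q : Set (Fin l → ℝ)} {p : Fin k → ℝ}
    {q : Fin l → ℝ} (hp : p ∈ P) (hq : q ∈ Q) : Fin.append p q ∈ prodSet P Q := by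
  simpa [prodSet_eq_preimage] using ⟨hp, hq⟩

lemma IsCompact.prodSet {P : Set (Fin k → ℝ)} {Q : Set (Fin l → ℝ)} (hP : IsCompact P)
    (hQ : IsCompact Q) : IsCompact (prodSet P Q) :=
  (Fin.appendHomeomorph k l).symm.isCompact_preimage.mpr (hP.prod hQ)

lemma IsConvexBody.prodSet {P : Set (Fin k → ℝ)} {Q : Set (Fin l → ℝ)} (hP : IsConvexBody P)
    (hQ : IsConvexBody Q) : IsConvexBody (prodSet P Q) := by
  refine ⟨(hP.1.linear_preimage fstPart).inter (hQ.1.linear_preimage sndPart), ?_, ?_⟩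
  · exact hP.2.1.prodSet hQ.2.1
  · rw [prodSet_eq_preimage, ← Homeomorph.preimage_interior, interior_prod_eq]
    exact (hP.2.2.prod hQ.2.2).preimage (Fin.appendHomeomorph k l).symm.surjective

lemma latticeDiam_prodSet_le {P : Set (Fin k → ℝ)} {Q : Set (Fin l → ℝ)} (hP : IsCompact P)
    (hQ : IsCompact Q) : latticeDiam (prodSet P Q) (intLattice (k + l)) ≤
      max (latticeDiam P (intLattice k)) (latticeDiam Q (intLattice l)) := by
  refine latticeDiam_le (le_max_of_le_left (latticeDiam_nonneg _ _))
    fun t a w ht hw hseg => ?_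
  rcases fstPart_ne_zero_or_sndPart_ne_zero hw.2.1 with h | h
  · exact le_max_of_le_left <| le_latticeDiam_of_mem_intLattice hP ht (fun i => hw.1 _) h
      (segment_subset_of_mapsTo fstPart.toAffineMap (fun _ hx => hx.1) hseg)
  · exact le_max_of_le_right <| le_latticeDiam_of_mem_intLattice hQ ht (fun j => hw.1 _) h
      (segment_subset_of_mapsTo sndPart.toAffineMap (fun _ hx => hx.2) hseg)

lemma latticeDiam_prodSet {P : Set (Fin k → ℝ)} {Q : Set (Fin l → ℝ)} (hP : IsCompact P)
    (hQ : IsCompact Q) (hQne : Q.Nonempty)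
    (hPQ : latticeDiam P (intLattice k) = latticeDiam Q (intLattice l)) :
    latticeDiam (prodSet P Q) (intLattice (k + l)) = latticeDiam P (intLattice k) := by
  refine le_antisymm ((latticeDiam_prodSet_le hP hQ).trans_eq (by rw [hPQ, max_self])) ?_
  obtain ⟨r, hr⟩ := hQne
  exact latticeDiam_le_of_mapsTo (embedFst r) (mapsTo_embedFst_linear r) (hP.prodSet hQ)
    fun _ hz => append_mem_prodSet hz hr

lemma exists_fstPart_notMem_sndPart_mem {P : Set (Fin k → ℝ)} {Q : Set (Fin l → ℝ)}
    {C : Set (Fin (k + l) → ℝ)} (hP : IsClosed P) (hPne : P.Nonempty)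
    (hQ : (interior Q).Nonempty) (hC : Convex ℝ C) (hPQC : prodSet P Q ⊆ C)
    {x : Fin (k + l) → ℝ} (hxC : x ∈ C) (hx : fstPart x ∉ P) :
    ∃ y ∈ C, fstPart y ∉ P ∧ sndPart y ∈ Q := by
  obtain ⟨q, hq⟩ := hQ
  obtain ⟨s, hs, hsQ⟩ := exists_lineMap_mem_of_mem_interior (sndPart x) hq
  obtain ⟨p, hp, hsP⟩ : ∃ p ∈ P, lineMap (fstPart x) p s ∉ P := by
    by_contra! h
    exact hx (mem_of_forall_lineMap_mem hP hPne hs h)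
  have hpq : Fin.append p q ∈ C := hPQC (append_mem_prodSet hp (interior_subset hq))
  refine ⟨lineMap x (Fin.append p q) s, hC.lineMap_mem hxC hpq (Ico_subset_Icc_self hs), ?_, ?_⟩
  · rwa [fstPart_lineMap, fstPart_append]
  · rwa [sndPart_lineMap, sndPart_append]

end Product

theorem prod_latticeComplete_general {k l : ℕ} (P : Set (Fin k → ℝ)) (Q : Set (Fin l → ℝ))
    (hPcomp : IsLatticeComplete P (intLattice k))
    (hQcomp : IsLatticeComplete Q (intLattice l))
    (hdiam : latticeDiam P (intLattice k) = latticeDiam Q (intLattice l)) :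
    IsLatticeComplete (prodSet P Q) (intLattice (k + l)) ∧
    latticeDiam (prodSet P Q) (intLattice (k + l)) = latticeDiam P (intLattice k) := by
  have hPQ := hPcomp.1.prodSet hQcomp.1
  have hdiamPQ := latticeDiam_prodSet hPcomp.1.2.1 hQcomp.1.2.1
    (hQcomp.1.2.2.mono interior_subset) hdiam
  refine ⟨⟨hPQ, fun C hC hPQC => ?_⟩, hdiamPQ⟩
  obtain ⟨x, hxC, hx⟩ := exists_of_ssubset hPQC
  rw [hdiamPQ]
  refine ne_of_gt ?_
  by_cases hxP : fstPart x ∈ P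
  · rw [hdiam]
    refine hQcomp.latticeDiam_lt_of_mapsTo (embedSnd (fstPart x))
      (isClosedEmbedding_embedSnd _) (mapsTo_embedSnd_linear _) hC.1 hC.2.1
      (fun _ hz => hPQC.subset (append_mem_prodSet hxP hz))
      (show sndPart x ∉ Q from fun hxQ => hx ⟨hxP, hxQ⟩) ?_
    rwa [embedSnd_apply, append_fstPart_sndPart]
  · obtain ⟨y, hyC, hyP, hyQ⟩ := exists_fstPart_notMem_sndPart_mem hPcomp.1.2.1.isClosed
      (hPcomp.1.2.2.mono interior_subset) hQcomp.1.2.2 hC.1 hPQC.subset hxC hxP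
    refine hPcomp.latticeDiam_lt_of_mapsTo (embedFst (sndPart y))
      (isClosedEmbedding_embedFst _) (mapsTo_embedFst_linear _) hC.1 hC.2.1
      (fun _ hz => hPQC.subset (append_mem_prodSet hz hyQ)) hyP ?_
    rwa [embedFst_apply, append_fstPart_sndPart]

/-- the product of two full-dimensional lattice complete
polytopes with the same lattice diameter is lattice complete, with the same
lattice diameter. -/
theorem prod_latticeComplete {k l : ℕ} (P : Set (Fin k → ℝ)) (Q : Set (Fin l → ℝ))
    (hPbody : IsConvexBody P) (hQbody : IsConvexBody Q)
    (hPpoly : IsPolytope P) (hQpoly : IsPolytope Q)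
    (hPcomp : IsLatticeComplete P (intLattice k))
    (hQcomp : IsLatticeComplete Q (intLattice l))
    (hdiam : latticeDiam P (intLattice k) = latticeDiam Q (intLattice l)) :
    IsLatticeComplete (prodSet P Q) (intLattice (k + l)) ∧
    latticeDiam (prodSet P Q) (intLattice (k + l)) = latticeDiam P (intLattice k) :=
  prod_latticeComplete_general P Q hPcomp hQcomp hdiam
end
end
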